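/- Let d ≥ 2 be an integer and let a, v_1, v_2, s be positive real numbers satisfying: (i) s · v_2^{1/(d−1)} ≤ a^{1/(d−1)}; (ii) a^{d/(d−1)} − v_1 · v_2^{1/(d−1)} ≥ (a^{1/(d−1)} − s · v_2^{1/(d−1)})^d; and (iii) a^d = v_1^{d−1} · v_2. Then a = s^{d−1} · v_2 and v_1 = s^d · v_2. -/

import Mathlib

/-!
Write `d = n + 1`. Taking `n`-th roots in (iii) gives `a ^ ((n + 1) / n) = v₁ · v₂ ^ (1 / n)`,
so the left side of the Diskant inequality (ii) vanishes. By (i) the base on its right is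
nonnegative, hence zero: `a ^ (1 / n) = s · v₂ ^ (1 / n)`, i.e. `a = sⁿ v₂`. Substituting back
into (iii) gives `v₁ⁿ = (sⁿ⁺¹ v₂)ⁿ`, and so `v₁ = sⁿ⁺¹ v₂`.
-/

open Real

lemma rpow_succ_div_eq_of_pow_succ_eq {n : ℕ} (hn : n ≠ 0) {a v w : ℝ} (ha : 0 ≤ a)
    (hv : 0 ≤ v) (hw : 0 ≤ w) (h : a ^ (n + 1) = v ^ n * w) :
    a ^ (((n : ℝ) + 1) / n) = v * w ^ ((1 : ℝ) / n) := by
  calc a ^ (((n : ℝ) + 1) / n) = (a ^ (n + 1)) ^ ((n : ℝ)⁻¹) := by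
        rw [← rpow_natCast, ← rpow_mul ha, Nat.cast_add_one, div_eq_mul_inv]
    _ = v * w ^ ((1 : ℝ) / n) := by
        rw [h, mul_rpow (by positivity) hw, pow_rpow_inv_natCast hv hn, one_div]

lemma eq_pow_mul_of_rpow_eq {n : ℕ} (hn : n ≠ 0) {a s w : ℝ} (ha : 0 ≤ a) (hw : 0 ≤ w)
    (h : a ^ ((1 : ℝ) / n) = s * w ^ ((1 : ℝ) / n)) : a = s ^ n * w := by
  rw [one_div] at h
  calc a = (a ^ ((n : ℝ)⁻¹)) ^ n := (rpow_inv_natCast_pow ha hn).symm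
    _ = s ^ n * w := by rw [h, mul_pow, rpow_inv_natCast_pow hw hn]

lemma eq_of_pow_succ_eq_pow_mul {n : ℕ} (hn : n ≠ 0) {a v w s : ℝ} (hv : 0 ≤ v) (hs : 0 ≤ s)
    (hw : 0 < w) (ha : a = s ^ n * w) (h : a ^ (n + 1) = v ^ n * w) : v = s ^ (n + 1) * w := by
  have hpow : v ^ n * w = (s ^ (n + 1) * w) ^ n * w := by rw [← h, ha]; ring
  exact (pow_left_inj₀ hv (by positivity) hn).mp (mul_right_cancel₀ hw.ne' hpow)

theorem stmt_10 (d : ℕ) (hd : 2 ≤ d) (a v1 v2 s : ℝ)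
    (ha : 0 < a) (hv1 : 0 < v1) (hv2 : 0 < v2) (hs : 0 < s)
    (hi : s * v2 ^ ((1 : ℝ) / (d - 1)) ≤ a ^ ((1 : ℝ) / (d - 1)))
    (hDiskant : a ^ ((d : ℝ) / (d - 1)) - v1 * v2 ^ ((1 : ℝ) / (d - 1)) ≥
      (a ^ ((1 : ℝ) / (d - 1)) - s * v2 ^ ((1 : ℝ) / (d - 1))) ^ d)
    (heq : a ^ d = v1 ^ (d - 1) * v2) :
    a = s ^ (d - 1) * v2 ∧ v1 = s ^ d * v2 := by
  obtain ⟨n, rfl⟩ : ∃ n, d = n + 1 := ⟨d - 1, by omega⟩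
  have hn : n ≠ 0 := by omega
  push_cast at hi hDiskant
  simp only [add_sub_cancel_right, Nat.add_sub_cancel] at hi hDiskant heq ⊢
  rw [rpow_succ_div_eq_of_pow_succ_eq hn ha.le hv1.le hv2.le heq, sub_self] at hDiskant
  have hroot : a ^ ((1 : ℝ) / n) = s * v2 ^ ((1 : ℝ) / n) := by
    have hzero := pow_eq_zero_iff (Nat.succ_ne_zero n) |>.mp
      (le_antisymm hDiskant (pow_nonneg (sub_nonneg.mpr hi) _))
    linarith
  have hA := eq_pow_mul_of_rpow_eq hn ha.le hv2.le hroot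
  exact ⟨hA, eq_of_pow_succ_eq_pow_mul hn hv1.le hs.le hv2 hA heq⟩
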